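/- For a downward closed family F of itemsets containing all singletons, if the empirical distribution q_D of the data is strictly positive, then the maximum entropy distribution among all distributions matching the empirical frequencies of all itemsets in F is the unique maximum likelihood distribution within the exponential model associated with F. -/

import Mathlib

open scoped Classical

/-- A family of itemsets is downward closed if it is closed under taking subsets. -/
def DownwardClosed {A : Type*} (F : Finset (Finset A)) : Prop :=
  ∀ X ∈ F, ∀ Y ⊆ X, Y ∈ F

variable {K : ℕ}

/-- The frequency of itemset `X` under distribution `p`: the probability that all
items of `X` take value `true`. -/
noncomputable def freq (p : (Fin K → Bool) → ℝ) (X : Finset (Fin K)) : ℝ :=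
  ∑ t ∈ Finset.univ.filter (fun t : Fin K → Bool => ∀ i ∈ X, t i = true), p t

/-- `p` is a probability distribution on `{0,1}^K`. -/
def IsDist (p : (Fin K → Bool) → ℝ) : Prop :=
  (∀ t, 0 ≤ p t) ∧ ∑ t, p t = 1

/-- The empirical distribution of a dataset `D`. -/
noncomputable def empirical (D : Multiset (Fin K → Bool)) : (Fin K → Bool) → ℝ :=
  fun t => (D.count t : ℝ) / (Multiset.card D : ℝ)

/-- The likelihood of a dataset `D` under distribution `p`. -/
noncomputable def likelihood (p : (Fin K → Bool) → ℝ) (D : Multiset (Fin K → Bool)) : ℝ :=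
  (D.map p).prod

/-- The (Shannon) entropy of a distribution. -/
noncomputable def entropyDist (p : (Fin K → Bool) → ℝ) : ℝ :=
  -∑ t, p t * Real.log (p t)

/-- Indicator `S_X(t)`: 1 if transaction `t` covers itemset `X`, else 0. -/
def ind (X : Finset (Fin K)) (t : Fin K → Bool) : ℝ :=
  if ∀ i ∈ X, t i = true then 1 else 0

/-- `p` has the exponential form associated with family `F`. -/
def ExpForm (F : Finset (Finset (Fin K))) (p : (Fin K → Bool) → ℝ) : Prop :=
  ∃ r : Finset (Fin K) → ℝ, ∀ t, p t = Real.exp (∑ X ∈ F, r X * ind X t)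

/-- The exponential model associated with `F`: distributions of exponential form
together with all their limits. -/
def ExpModel (F : Finset (Finset (Fin K))) : Set ((Fin K → Bool) → ℝ) :=
  closure {p | ExpForm F p}

/-- `p` matches the frequencies of `q` on every itemset of `F`. -/
def Matches (F : Finset (Finset (Fin K))) (p q : (Fin K → Bool) → ℝ) : Prop :=
  ∀ X ∈ F, freq p X = freq q X

/-- The marginal probability under `p` of observing the values of `t` on the
coordinates of `X`. -/
noncomputable def marg (p : (Fin K → Bool) → ℝ) (X : Finset (Fin K)) (t : Fin K → Bool) : ℝ :=
  ∑ s ∈ Finset.univ.filter (fun s : Fin K → Bool => ∀ i ∈ X, s i = t i), p s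

/-- The empirical entropy of an itemset `X` under distribution `q`. -/
noncomputable def entropyOf (q : (Fin K → Bool) → ℝ) (X : Finset (Fin K)) : ℝ :=
  -∑ u : {i // i ∈ X} → Bool,
      (marg q X fun i => if h : i ∈ X then u ⟨i, h⟩ else false) *
        Real.log (marg q X fun i => if h : i ∈ X then u ⟨i, h⟩ else false)

/-- Kullback–Leibler divergence. -/
noncomputable def KLdiv (p q : (Fin K → Bool) → ℝ) : ℝ :=
  ∑ t, p t * Real.log (p t / q t)

/-!
A maximum entropy distribution `p*` is strictly positive: mixing in a fraction `ε` of the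
positive empirical distribution gains order `-ε log ε` of entropy at any zero of `p*`. First-order
optimality then makes `log p*` orthogonal to every direction preserving the frequencies of `F`;
since `∅ ∈ F`, these directions form the orthogonal complement of `span {S_X | X ∈ F}`, so
`log p*` lies in that span, i.e. `p*` has exponential form.

If `q` has exponential form, `log q` is a combination of the `S_X`, so the log-likelihood of `D`
under `q` depends on `D` only through the frequencies of `F` and equals `N ∑ p* log q`; by Gibbs'
inequality this is maximal exactly at `q = p*`. A positive limit of exponential forms is again
one because the span is closed, and a limit with a zero has likelihood `0` as `q_D > 0`.
-/

open Real Finset Filter Topology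

section Gibbs

variable {α : Type*} [Fintype α]

lemma mul_log_sub_mul_log_lt {p q : ℝ} (hp : 0 < p) (hq : 0 < q) (hne : q ≠ p) :
    p * log q - p * log p < q - p := by
  have h := log_lt_sub_one_of_pos (div_pos hq hp) (by rwa [ne_eq, div_eq_one_iff_eq hp.ne'])
  rw [log_div hq.ne' hp.ne'] at h
  calc p * log q - p * log p = p * (log q - log p) := by ring
    _ < p * (q / p - 1) := mul_lt_mul_of_pos_left h hp
    _ = q - p := by field_simp

lemma sum_mul_log_lt_sum_mul_log_self {p q : α → ℝ} (hp : ∀ a, 0 < p a) (hq : ∀ a, 0 < q a)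
    (hsum : ∑ a, q a = ∑ a, p a) (hne : q ≠ p) :
    ∑ a, p a * log (q a) < ∑ a, p a * log (p a) := by
  have hle : ∀ a, p a * log (q a) - p a * log (p a) ≤ q a - p a := fun a => by
    rcases eq_or_ne (q a) (p a) with h | h
    · simp [h]
    · exact (mul_log_sub_mul_log_lt (hp a) (hq a) h).le
  obtain ⟨a, ha⟩ := Function.ne_iff.1 hne
  have h := Finset.sum_lt_sum (fun a _ => hle a)
    ⟨a, mem_univ a, mul_log_sub_mul_log_lt (hp a) (hq a) ha⟩
  rw [sum_sub_distrib, sum_sub_distrib, hsum, sub_self] at h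
  linarith

end Gibbs

variable {F : Finset (Finset (Fin K))} {p q : (Fin K → Bool) → ℝ}

lemma freq_eq_sum_mul_ind (p : (Fin K → Bool) → ℝ) (X : Finset (Fin K)) :
    freq p X = ∑ t, p t * ind X t := by
  simp [freq, ind, sum_filter]

@[simp]
lemma freq_empty (p : (Fin K → Bool) → ℝ) : freq p ∅ = ∑ t, p t := by
  simp [freq]

@[simp]
lemma freq_add (p q : (Fin K → Bool) → ℝ) (X : Finset (Fin K)) :
    freq (p + q) X = freq p X + freq q X := by
  simp [freq, sum_add_distrib]

@[simp]
lemma freq_smul (c : ℝ) (p : (Fin K → Bool) → ℝ) (X : Finset (Fin K)) :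
    freq (c • p) X = c * freq p X := by
  simp [freq, mul_sum]

lemma entropyDist_eq_sum_negMulLog (p : (Fin K → Bool) → ℝ) :
    entropyDist p = ∑ t, negMulLog (p t) := by
  simp [entropyDist, negMulLog, sum_neg_distrib]

lemma IsDist.eq_one_of_fin_zero {p : (Fin 0 → Bool) → ℝ} (hp : IsDist p) : p = 1 := by
  funext t
  rw [Pi.one_apply, ← hp.2, Fintype.sum_unique]
  exact congrArg p (Subsingleton.elim _ _)

section Likelihood

variable {D : Multiset (Fin K → Bool)}

lemma isDist_empirical (hD : D ≠ 0) : IsDist (empirical D) := by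
  have hN : (Multiset.card D : ℝ) ≠ 0 := by simpa using hD
  refine ⟨fun t => div_nonneg (Nat.cast_nonneg _) (Nat.cast_nonneg _), ?_⟩
  simp only [empirical, ← sum_div, div_eq_one_iff_eq hN]
  exact_mod_cast Multiset.sum_count_eq_card (s := univ) fun t _ => mem_univ t

lemma mem_of_empirical_pos {t : Fin K → Bool} (ht : 0 < empirical D t) : t ∈ D := by
  by_contra h
  simp [empirical, Multiset.count_eq_zero_of_notMem h] at ht

lemma likelihood_pos (hp : ∀ t, 0 < p t) : 0 < likelihood p D :=
  Multiset.prod_pos fun _ h => by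
    obtain ⟨t, -, rfl⟩ := Multiset.mem_map.1 h
    exact hp t

lemma likelihood_eq_zero_of_mem {t : Fin K → Bool} (ht : t ∈ D) (hp : p t = 0) :
    likelihood p D = 0 :=
  Multiset.prod_eq_zero (hp ▸ Multiset.mem_map_of_mem p ht)

lemma log_likelihood (hD : D ≠ 0) (hp : ∀ t, 0 < p t) :
    log (likelihood p D) = Multiset.card D * ∑ t, empirical D t * log (p t) := by
  have hN : (Multiset.card D : ℝ) ≠ 0 := by simpa using hD
  rw [likelihood, Finset.prod_multiset_map_count, log_prod fun t _ => pow_ne_zero _ (hp t).ne',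
    mul_sum, ← sum_subset (subset_univ D.toFinset)]
  · refine sum_congr rfl fun t _ => ?_
    rw [log_pow, empirical]
    field_simp
  · intro t _ ht
    simp [empirical, Multiset.count_eq_zero.2 (by simpa using ht)]

end Likelihood

lemma ExpForm.pos (hp : ExpForm F p) (t : Fin K → Bool) : 0 < p t := by
  obtain ⟨r, hr⟩ := hp
  exact hr t ▸ exp_pos _

lemma ExpForm.sum_mul_log_eq {a b : (Fin K → Bool) → ℝ} (hp : ExpForm F p)
    (hab : Matches F a b) :
    ∑ t, a t * log (p t) = ∑ t, b t * log (p t) := by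
  obtain ⟨r, hr⟩ := hp
  have key : ∀ c : (Fin K → Bool) → ℝ,
      ∑ t, c t * log (p t) = ∑ X ∈ F, r X * freq c X := by
    intro c
    simp only [hr, log_exp, freq_eq_sum_mul_ind, mul_sum]
    rw [sum_comm]
    exact sum_congr rfl fun X _ => sum_congr rfl fun t _ => by ring
  rw [key, key]
  exact sum_congr rfl fun X hX => by rw [hab X hX]

lemma likelihood_lt_of_expForm {D : Multiset (Fin K → Bool)} (hD : D ≠ 0) (hp : ExpForm F p)
    (hq : ExpForm F q) (hpd : IsDist p) (hqd : IsDist q) (hne : q ≠ p)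
    (hmatch : Matches F p (empirical D)) : likelihood q D < likelihood p D := by
  rw [← log_lt_log_iff (likelihood_pos hq.pos) (likelihood_pos hp.pos), log_likelihood hD hq.pos,
    log_likelihood hD hp.pos, ← hq.sum_mul_log_eq hmatch, ← hp.sum_mul_log_eq hmatch]
  exact mul_lt_mul_of_pos_left
    (sum_mul_log_lt_sum_mul_log_self hp.pos hq.pos (by rw [hpd.2, hqd.2]) hne)
    (by simpa [Nat.pos_iff_ne_zero] using hD)

def IsMaxEnt (F : Finset (Finset (Fin K))) (q p : (Fin K → Bool) → ℝ) : Prop :=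
  IsDist p ∧ Matches F p q ∧
    ∀ p', IsDist p' → Matches F p' q → entropyDist p' ≤ entropyDist p

lemma entropyDist_mix_ge {ε : ℝ} (hε₀ : 0 ≤ ε) (hε₁ : ε ≤ 1) (hp : ∀ t, 0 ≤ p t)
    (hq : ∀ t, 0 ≤ q t) {t₀ : Fin K → Bool} (ht₀ : p t₀ = 0) :
    (1 - ε) * entropyDist p + ε * entropyDist q + q t₀ * negMulLog ε ≤
      entropyDist ((1 - ε) • p + ε • q) := by
  have hconc : ∀ t, (1 - ε) * negMulLog (p t) + ε * negMulLog (q t) ≤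
      negMulLog ((1 - ε) * p t + ε * q t) := fun t => by
    simpa using concaveOn_negMulLog.2 (hp t) (hq t) (sub_nonneg.2 hε₁) hε₀ (by ring)
  have hgain : negMulLog ((1 - ε) * p t₀ + ε * q t₀) =
      (1 - ε) * negMulLog (p t₀) + ε * negMulLog (q t₀) + q t₀ * negMulLog ε := by
    rw [ht₀, mul_zero, zero_add, negMulLog_mul, negMulLog_zero]
    ring
  simp only [entropyDist_eq_sum_negMulLog, mul_sum, ← sum_add_distrib, Pi.add_apply,
    Pi.smul_apply, smul_eq_mul]
  rw [← add_sum_erase _ _ (mem_univ t₀), ← add_sum_erase _ _ (mem_univ t₀), hgain]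
  have := sum_le_sum fun t (_ : t ∈ univ.erase t₀) => hconc t
  linarith

lemma IsMaxEnt.pos (hmax : IsMaxEnt F q p) (hq : IsDist q) (hqpos : ∀ t, 0 < q t)
    (t : Fin K → Bool) : 0 < p t := by
  by_contra! ht
  have ht₀ : p t = 0 := le_antisymm ht (hmax.1.1 t)
  -- Mixing in a fraction `ε` of `q` gains `q t * negMulLog ε` at `t`, which beats the linear
  -- loss `ε * (entropyDist p - entropyDist q)` as `ε → 0`.
  have hbound : ∀ ε, 0 < ε → ε < 1 → entropyDist q - entropyDist p ≤ q t * log ε := by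
    intro ε hε₀ hε₁
    have hmix : IsDist ((1 - ε) • p + ε • q) := by
      refine ⟨fun s => ?_, ?_⟩
      · have := hmax.1.1 s
        have := hq.1 s
        have : 0 ≤ 1 - ε := by linarith
        simp only [Pi.add_apply, Pi.smul_apply, smul_eq_mul]
        positivity
      · simp [sum_add_distrib, ← mul_sum, hmax.1.2, hq.2]
    have hle := hmax.2.2 _ hmix fun X hX => by simp [hmax.2.1 X hX]; ring
    have hge := entropyDist_mix_ge hε₀.le hε₁.le hmax.1.1 hq.1 ht₀
    rw [negMulLog] at hge
    nlinarith
  have hlim : Tendsto (fun ε => q t * log ε) (𝓝[>] 0) atBot :=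
    tendsto_log_nhdsGT_zero.const_mul_atBot (hqpos t)
  obtain ⟨ε, hlt, hε⟩ := ((hlim.eventually_lt_atBot (entropyDist q - entropyDist p)).and
    (Ioo_mem_nhdsGT one_pos)).exists
  linarith [hbound ε hε.1 hε.2]

lemma hasDerivAt_entropyDist_add_smul (hp : ∀ t, 0 < p t) (w : (Fin K → Bool) → ℝ) :
    HasDerivAt (fun ε : ℝ => entropyDist (p + ε • w)) (∑ t, (-log (p t) - 1) * w t) 0 := by
  simp only [entropyDist_eq_sum_negMulLog, Pi.add_apply, Pi.smul_apply, smul_eq_mul]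
  refine HasDerivAt.fun_sum fun t _ => ?_
  have hin : HasDerivAt (fun ε : ℝ => p t + ε * w t) (w t) 0 := by
    simpa using ((hasDerivAt_id (0 : ℝ)).mul_const (w t)).const_add (p t)
  have hout : HasDerivAt negMulLog (-log (p t) - 1) (p t + 0 * w t) := by
    simpa using hasDerivAt_negMulLog (hp t).ne'
  exact hout.comp 0 hin

lemma IsMaxEnt.sum_mul_log_eq_zero (hmax : IsMaxEnt F q p) (hempty : ∅ ∈ F)
    (hpos : ∀ t, 0 < p t) {w : (Fin K → Bool) → ℝ} (hw : ∀ X ∈ F, freq w X = 0) :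
    ∑ t, w t * log (p t) = 0 := by
  -- `∅ ∈ F` makes `w` preserve total mass, so `p + ε • w` is a competitor for small `ε`.
  have hw₀ : ∑ t, w t = 0 := by simpa using hw ∅ hempty
  have hloc : IsLocalMax (fun ε : ℝ => entropyDist (p + ε • w)) 0 := by
    have hev : ∀ᶠ ε : ℝ in 𝓝 0, ∀ t, 0 < p t + ε * w t := eventually_all.2 fun t =>
      ((continuous_const.add (continuous_id.mul continuous_const)).tendsto' 0 (p t)
        (by simp)).eventually (lt_mem_nhds (hpos t))
    filter_upwards [hev] with ε hε
    refine (hmax.2.2 (p + ε • w) ⟨fun t => (hε t).le, ?_⟩ fun X hX => ?_).trans_eq (by simp)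
    · simp only [Pi.add_apply, Pi.smul_apply, smul_eq_mul]
      rw [sum_add_distrib, ← mul_sum, hw₀, mul_zero, add_zero, hmax.1.2]
    · simp [hw X hX, hmax.2.1 X hX]
  have h := hloc.hasDerivAt_eq_zero (hasDerivAt_entropyDist_add_smul hpos w)
  simp only [sub_mul, neg_mul, sum_sub_distrib, sum_neg_distrib, one_mul, hw₀] at h
  simpa [mul_comm] using h

noncomputable def indSpan (F : Finset (Finset (Fin K))) :
    Submodule ℝ (EuclideanSpace ℝ (Fin K → Bool)) :=
  Submodule.span ℝ ((fun X => WithLp.toLp 2 (ind X)) '' F)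

lemma toLp_mem_indSpan_iff {g : (Fin K → Bool) → ℝ} :
    WithLp.toLp 2 g ∈ indSpan F ↔
      ∃ r : Finset (Fin K) → ℝ, ∀ t, g t = ∑ X ∈ F, r X * ind X t := by
  simp only [indSpan, Submodule.mem_span_image_finset_iff_exists_fun', ← WithLp.toLp_smul,
    ← WithLp.toLp_sum, (WithLp.toLp_injective 2).eq_iff, funext_iff, Finset.sum_apply,
    Pi.smul_apply, smul_eq_mul]
  exact exists_congr fun r => forall_congr' fun t => eq_comm

lemma expForm_iff_toLp_log_mem_indSpan (hp : ∀ t, 0 < p t) :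
    ExpForm F p ↔ WithLp.toLp 2 (fun t => log (p t)) ∈ indSpan F := by
  rw [toLp_mem_indSpan_iff]
  refine exists_congr fun r => forall_congr' fun t => ?_
  exact ⟨fun h => by rw [h, log_exp], fun h => by rw [← h, exp_log (hp t)]⟩

lemma IsMaxEnt.expForm (hmax : IsMaxEnt F q p) (hempty : ∅ ∈ F) (hpos : ∀ t, 0 < p t) :
    ExpForm F p := by
  rw [expForm_iff_toLp_log_mem_indSpan hpos, ← (indSpan F).orthogonal_orthogonal,
    Submodule.mem_orthogonal']
  intro u hu
  have hw : ∀ X ∈ F, freq (WithLp.ofLp u) X = 0 := fun X hX => by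
    have := Submodule.inner_right_of_mem_orthogonal
      (Submodule.subset_span (Set.mem_image_of_mem _ hX)) hu
    simpa [freq_eq_sum_mul_ind, EuclideanSpace.inner_eq_star_dotProduct, dotProduct] using this
  simpa [EuclideanSpace.inner_eq_star_dotProduct, dotProduct, mul_comm]
    using hmax.sum_mul_log_eq_zero hempty hpos hw

lemma expForm_of_mem_expModel (hq : q ∈ ExpModel F) (hpos : ∀ t, 0 < q t) : ExpForm F q := by
  set f : ((Fin K → Bool) → ℝ) → EuclideanSpace ℝ (Fin K → Bool) :=
    fun p => WithLp.toLp 2 (fun t => log (p t))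
  have hf : ContinuousAt f q := (PiLp.continuous_toLp 2 _).continuousAt.comp
    (continuousAt_pi.2 fun t => (continuous_apply t).continuousAt.log (hpos t).ne')
  have himage : f '' {p | ExpForm F p} ⊆ indSpan F := by
    rintro _ ⟨p, hp, rfl⟩
    exact (expForm_iff_toLp_log_mem_indSpan hp.pos).1 hp
  rw [expForm_iff_toLp_log_mem_indSpan hpos]
  exact closure_minimal himage (indSpan F).closed_of_finiteDimensional (mem_closure_image hf hq)

/-- Theorem: for a downward closed family `F` containing all singletons, if the empirical
distribution of the data is strictly positive, then the maximum entropy distribution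
among all distributions matching the empirical frequencies of the itemsets of `F` is the
unique maximum likelihood distribution within the exponential model associated with
`F`. -/
theorem maxent_is_unique_mle (F : Finset (Finset (Fin K)))
    (hdc : DownwardClosed F) (hsing : ∀ i : Fin K, ({i} : Finset (Fin K)) ∈ F)
    (D : Multiset (Fin K → Bool)) (hD : D ≠ 0)
    (hpos : ∀ t, 0 < empirical D t)
    (pstar : (Fin K → Bool) → ℝ)
    (hdist : IsDist pstar) (hmatch : Matches F pstar (empirical D))
    (hmaxent : ∀ p : (Fin K → Bool) → ℝ, IsDist p → Matches F p (empirical D) →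
      entropyDist p ≤ entropyDist pstar) :
    pstar ∈ ExpModel F ∧
      ∀ q ∈ ExpModel F, IsDist q → q ≠ pstar →
        likelihood q D < likelihood pstar D := by
  -- For `K = 0` the family `F` may miss `∅`, but there is only one distribution.
  rcases K.eq_zero_or_pos with rfl | hK
  · have hone := hdist.eq_one_of_fin_zero
    exact ⟨subset_closure ⟨0, fun t => by simp [hone]⟩,
      fun q _ hq hne => absurd (hq.eq_one_of_fin_zero.trans hone.symm) hne⟩
  have hempty : ∅ ∈ F := hdc _ (hsing ⟨0, hK⟩) ∅ (empty_subset _)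
  have hmax : IsMaxEnt F (empirical D) pstar := ⟨hdist, hmatch, hmaxent⟩
  have hexp : ExpForm F pstar := hmax.expForm hempty (hmax.pos (isDist_empirical hD) hpos)
  refine ⟨subset_closure hexp, fun q hq hqd hne => ?_⟩
  by_cases hqpos : ∀ t, 0 < q t
  · exact likelihood_lt_of_expForm hD hexp (expForm_of_mem_expModel hq hqpos) hdist hqd hne hmatch
  obtain ⟨t, ht⟩ := not_forall.1 hqpos
  rw [likelihood_eq_zero_of_mem (mem_of_empirical_pos (hpos t))
    (le_antisymm (not_lt.1 ht) (hqd.1 t))]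
  exact likelihood_pos hexp.pos
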